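/- arXiv:1104.4044 — 9 statements merged into one kernel-verified Lean document; each statement's English description precedes it below -/
import Mathlib

section
/- For a Boolean automata circuit of size n with all local functions equal to identity or negation, and parallel update function F, the set of unstable nodes is shifted by one under F: U(F(x)) = {i : i-1 mod n in U(x)}. Consequently the number of unstable nodes is invariant: u(x) = u(F^k(x)) for all k. -/
/- Every local function is a bijection of `Bool`, so node `i` of `F x` is unstable, i.e.
`f i (x (i - 1)) ≠ f i (F x (i - 1)) = f i (f (i - 1) (x (i - 2)))`, exactly when node `i - 1` of `x`
is unstable. Translation by one is a bijection of `ZMod n`, so the number of unstable nodes is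
preserved by `F`, and hence by all its iterates. -/

open Finset

/-- Set of unstable nodes of a Boolean automata circuit. -/
def U {n : ℕ} [NeZero n] (f : ZMod n → Bool → Bool) (x : ZMod n → Bool) :
    Finset (ZMod n) :=
  univ.filter (fun i => x i ≠ f i (x (i - 1)))

/-- Parallel update of a Boolean automata circuit. -/
def Fpar {n : ℕ} (f : ZMod n → Bool → Bool) (x : ZMod n → Bool) :
    ZMod n → Bool :=
  fun i => f i (x (i - 1))

theorem Finset.card_filter_sub_mem {G : Type*} [AddGroup G] [Fintype G] [DecidableEq G]
    (s : Finset G) (a : G) : (univ.filter fun i => i - a ∈ s).card = s.card := by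
  refine card_nbij' (· - a) (· + a) ?_ ?_ ?_ ?_ <;> intro i <;> simp

lemma U_Fpar_of_injective {n : ℕ} [NeZero n] {f : ZMod n → Bool → Bool}
    (hf : ∀ i, Function.Injective (f i)) (x : ZMod n → Bool) :
    U f (Fpar f x) = univ.filter (fun i => i - 1 ∈ U f x) := by
  ext i
  simp only [U, mem_filter_univ]
  exact (hf i).ne_iff

lemma card_U_Fpar_of_injective {n : ℕ} [NeZero n] {f : ZMod n → Bool → Bool}
    (hf : ∀ i, Function.Injective (f i)) (x : ZMod n → Bool) :
    (U f (Fpar f x)).card = (U f x).card := by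
  rw [U_Fpar_of_injective hf, card_filter_sub_mem]

/-- the unstable set is shifted by one under the parallel update,
and hence the number of unstable nodes is invariant under iterates of `F`. -/
theorem unstable_set_shifts_under_parallel_update
    (n : ℕ) [NeZero n] (f : ZMod n → Bool → Bool)
    (hf : ∀ i, f i = id ∨ f i = fun b => !b) (x : ZMod n → Bool) :
    U f (Fpar f x) = univ.filter (fun i => i - 1 ∈ U f x) ∧
    ∀ k : ℕ, (U f ((Fpar f)^[k] x)).card = (U f x).card := by
  have hinj : ∀ i, Function.Injective (f i) := fun i => by
    rcases hf i with h | h <;> rw [h]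
    exacts [Function.injective_id, Bool.not_injective]
  refine ⟨U_Fpar_of_injective hinj x, fun k => ?_⟩
  have hinv : (fun y => (U f y).card) ∘ Fpar f = fun y => (U f y).card :=
    funext (card_U_Fpar_of_injective hinj)
  exact congrFun (Function.iterate_invariant hinv k) x
end

section
/- Let C be a Boolean automata circuit of size n. If C is positive (the number of indices i with f_i = neg is even), then u(x) is even for every configuration x in {0,1}^n; if C is negative (that number is odd), then u(x) is odd for every configuration x. -/
open Finset

/-! Count modulo 2. The instability `x i ≠ f i (x (i - 1))` is `x i ≠ x (i - 1)` flipped exactly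
when `f i` is a negation, so `u x ≡ #{i | x i ≠ x (i - 1)} + #{negative arcs}`. The first count is
even: `[x i ≠ x (i - 1)] ≡ [x i] + [x (i - 1)]`, and summing over the cycle counts every `[x i]`
twice. -/

lemma ite_ne_eq_add (a b : Bool) :
    (if a ≠ b then (1 : ZMod 2) else 0) = (if a then 1 else 0) + (if b then 1 else 0) := by
  cases a <;> cases b <;> decide

lemma ite_ne_apply_eq_add {g : Bool → Bool} (hg : g = id ∨ g = not) (a b : Bool) :
    (if a ≠ g b then (1 : ZMod 2) else 0) =
      (if a ≠ b then 1 else 0) + (if g = not then 1 else 0) := by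
  rcases hg with rfl | rfl <;> cases a <;> cases b <;> decide

lemma even_card_filter_ne_comp_perm {α : Type*} [Fintype α] (σ : Equiv.Perm α) (x : α → Bool) :
    Even #{i | x i ≠ x (σ i)} := by
  rw [← ZMod.natCast_eq_zero_iff_even, natCast_card_filter]
  simp_rw [ite_ne_eq_add]
  rw [sum_add_distrib, Equiv.sum_comp σ (fun i => if x i then (1 : ZMod 2) else 0)]
  exact CharTwo.add_self_eq_zero _

lemma even_card_unstable_iff {α : Type*} [Fintype α] (σ : Equiv.Perm α) (f : α → Bool → Bool)
    (hf : ∀ i, f i = id ∨ f i = not) (x : α → Bool) :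
    Even #{i | x i ≠ f i (x (σ i))} ↔ Even #{i | f i = not} := by
  rw [← ZMod.natCast_eq_zero_iff_even, ← ZMod.natCast_eq_zero_iff_even, natCast_card_filter,
    natCast_card_filter, sum_congr rfl fun i _ => ite_ne_apply_eq_add (hf i) (x i) (x (σ i)), sum_add_distrib,
    ← natCast_card_filter, ZMod.natCast_eq_zero_iff_even.mpr (even_card_filter_ne_comp_perm σ x),
    zero_add]

/-- in a positive circuit `u x` is even for every configuration;
in a negative circuit `u x` is odd for every configuration. -/
theorem parity_of_unstable_count
    (n : ℕ) [NeZero n] (f : ZMod n → Bool → Bool)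
    (hf : ∀ i, f i = id ∨ f i = fun b => !b) (x : ZMod n → Bool) :
    (Even (univ.filter (fun i : ZMod n => f i = fun b => !b)).card →
      Even (U f x).card) ∧
    (Odd (univ.filter (fun i : ZMod n => f i = fun b => !b)).card →
      Odd (U f x).card) := by
  have h : Even (U f x).card ↔ Even (univ.filter (fun i : ZMod n => f i = fun b => !b)).card :=
    even_card_unstable_iff (Equiv.subRight 1) f hf x
  simp only [← Nat.not_even_iff_odd, h]
  exact ⟨id, id⟩
end

section
/- For a Boolean automata circuit of size n and any k between 0 and n, the number of configurations x in {0,1}^n with u(x) = k is exactly 2 * binom(n, k), provided k has the same parity as the number of negative local functions (otherwise it is 0). -/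
/-!
Two configurations with the same value at node `0` and the same unstable set agree
everywhere, by propagation along the circuit. Modulo 2 the indicator of `x i ≠ f i (x (i - 1))`
is `x i + x (i - 1) + [f i = not]`; summed around the circuit the `x`-terms cancel, so `#U f x`
has the parity of the number of negative nodes. Conversely, given `b` and `S` of that parity,
propagating from `x 0 = b` makes the unstable nodes other than `0` exactly those of `S`, and
parity then forces agreement at `0` as well. Hence `x ↦ (x 0, U f x)` is a bijection onto
`Bool × {S | #S = k}` when `k` has the right parity.
-/

open Finset

theorem Finset.eq_of_erase_eq_of_card_mod_two_eq {α : Type*} [DecidableEq α] {A B : Finset α}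
    {a : α} (h : A.erase a = B.erase a) (hc : #A % 2 = #B % 2) : A = B := by
  by_cases hA : a ∈ A <;> by_cases hB : a ∈ B
  · rw [← insert_erase hA, ← insert_erase hB, h]
  · rw [erase_eq_of_notMem hB] at h
    rw [← h] at hc
    have := card_erase_add_one hA
    omega
  · rw [erase_eq_of_notMem hA] at h
    rw [h] at hc
    have := card_erase_add_one hB
    omega
  · rwa [erase_eq_of_notMem hA, erase_eq_of_notMem hB] at h

namespace BooleanAutomataCircuit

variable {n : ℕ} [NeZero n] {f : ZMod n → Bool → Bool}

theorem mem_U {x : ZMod n → Bool} {i : ZMod n} : i ∈ U f x ↔ x i ≠ f i (x (i - 1)) := by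
  simp [U]

def negNodes (f : ZMod n → Bool → Bool) : Finset (ZMod n) :=
  univ.filter fun i => f i = fun b => !b

theorem card_U_cast_zmod_two (hf : ∀ i, f i = id ∨ f i = fun b => !b) (x : ZMod n → Bool) :
    (#(U f x) : ZMod 2) = #(negNodes f) := by
  have hnode : ∀ i, ((if x i ≠ f i (x (i - 1)) then 1 else 0 : ℕ) : ZMod 2) =
      (x i).toNat + (x (i - 1)).toNat +
        ((if f i = (fun b => !b) then 1 else 0 : ℕ) : ZMod 2) := by
    intro i
    rcases hf i with h | h <;> rw [h] <;> cases x i <;> cases x (i - 1) <;> decide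
  have hshift : ∑ i, ((x (i - 1)).toNat : ZMod 2) = ∑ i, ((x i).toNat : ZMod 2) :=
    Fintype.sum_equiv (Equiv.subRight 1) _ _ fun _ => rfl
  simp only [U, negNodes, card_filter, Nat.cast_sum, hnode, sum_add_distrib, hshift,
    CharTwo.add_self_eq_zero, zero_add]

theorem card_U_mod_two (hf : ∀ i, f i = id ∨ f i = fun b => !b) (x : ZMod n → Bool) :
    #(U f x) % 2 = #(negNodes f) % 2 :=
  (ZMod.natCast_eq_natCast_iff' _ _ _).mp (card_U_cast_zmod_two hf x)

theorem eq_of_apply_zero_eq_of_U_eq {x y : ZMod n → Bool} (h0 : x 0 = y 0)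
    (hU : U f x = U f y) : x = y := by
  have hnat : ∀ m : ℕ, x m = y m := by
    intro m
    induction m with
    | zero => simpa using h0
    | succ m ih =>
      have hi := congrArg (((m + 1 : ℕ) : ZMod n) ∈ ·) hU
      simp only [mem_U, Nat.cast_succ, add_sub_cancel_right, ih] at hi
      rw [Nat.cast_succ]
      revert hi
      cases x (m + 1) <;> cases y (m + 1) <;> simp
  funext i
  simpa using hnat i.val

def buildConfig (f : ZMod n → Bool → Bool) (b : Bool) (S : Finset (ZMod n)) : ℕ → Bool
  | 0 => b
  | m + 1 => f (m + 1 : ℕ) (buildConfig f b S m) ^^ decide (((m + 1 : ℕ) : ZMod n) ∈ S)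

theorem mem_U_buildConfig_iff {b : Bool} {S : Finset (ZMod n)} {i : ZMod n} (hi : i ≠ 0) :
    i ∈ U f (fun j => buildConfig f b S j.val) ↔ i ∈ S := by
  obtain ⟨m, hm⟩ := Nat.exists_eq_add_one_of_ne_zero ((ZMod.val_ne_zero i).mpr hi)
  have hi : ((m + 1 : ℕ) : ZMod n) = i := by rw [← hm, ZMod.natCast_zmod_val]
  have hval : (i - 1).val = m := by
    rw [← hi, Nat.cast_succ, add_sub_cancel_right, ZMod.val_cast_of_lt]
    have := ZMod.val_lt i
    omega
  rw [mem_U, hm, hval, buildConfig, hi]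
  by_cases h : i ∈ S <;> simp [h]

theorem exists_apply_zero_eq_and_U_eq (hf : ∀ i, f i = id ∨ f i = fun b => !b) (b : Bool)
    {S : Finset (ZMod n)} (hS : #S % 2 = #(negNodes f) % 2) :
    ∃ x : ZMod n → Bool, x 0 = b ∧ U f x = S := by
  refine ⟨fun j => buildConfig f b S j.val, by simp [buildConfig], ?_⟩
  refine eq_of_erase_eq_of_card_mod_two_eq (a := 0) ?_ (by rw [card_U_mod_two hf, hS])
  ext i
  by_cases hi : i = 0
  · simp [hi]
  · simp [hi, mem_U_buildConfig_iff hi]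

theorem card_filter_card_U_eq (hf : ∀ i, f i = id ∨ f i = fun b => !b) {k : ℕ}
    (hk : k % 2 = #(negNodes f) % 2) :
    #(univ.filter fun x : ZMod n → Bool => #(U f x) = k) = 2 * n.choose k := by
  calc #(univ.filter fun x : ZMod n → Bool => #(U f x) = k)
      = #((univ : Finset Bool) ×ˢ powersetCard k (univ : Finset (ZMod n))) := by
        refine card_bij (fun x _ => (x 0, U f x)) (fun x hx => by simpa using hx)
          (fun _ _ _ _ hxy => (Prod.mk.inj hxy).elim eq_of_apply_zero_eq_of_U_eq) ?_
        rintro ⟨b, S⟩ hS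
        rw [mem_product, mem_powersetCard] at hS
        obtain ⟨x, hx0, hxS⟩ := exists_apply_zero_eq_and_U_eq hf b (hS.2.2 ▸ hk)
        exact ⟨x, by simp [hxS, hS.2.2], by rw [hx0, hxS]⟩
    _ = 2 * n.choose k := by simp

theorem filter_card_U_eq_eq_empty (hf : ∀ i, f i = id ∨ f i = fun b => !b) {k : ℕ}
    (hk : k % 2 ≠ #(negNodes f) % 2) :
    univ.filter (fun x : ZMod n → Bool => #(U f x) = k) = ∅ :=
  filter_eq_empty_iff.mpr fun x _ hx => hk (hx ▸ card_U_mod_two hf x)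

end BooleanAutomataCircuit

theorem card_configurations_with_given_unstable_count_general
    (n k : ℕ) [NeZero n] (f : ZMod n → Bool → Bool)
    (hf : ∀ i, f i = id ∨ f i = fun b => !b) :
    (univ.filter (fun x : ZMod n → Bool => (U f x).card = k)).card =
      if k % 2 = (univ.filter (fun i : ZMod n => f i = fun b => !b)).card % 2
      then 2 * Nat.choose n k else 0 := by
  split_ifs with hk
  · exact BooleanAutomataCircuit.card_filter_card_U_eq hf hk
  · rw [BooleanAutomataCircuit.filter_card_U_eq_eq_empty hf hk, card_empty]

/-- the number of configurations with `u x = k` is `2 * choose n k`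
when `k` has the parity of the number of negative local functions, else `0`. -/
theorem card_configurations_with_given_unstable_count
    (n k : ℕ) [NeZero n] (hk : k ≤ n) (f : ZMod n → Bool → Bool)
    (hf : ∀ i, f i = id ∨ f i = fun b => !b) :
    (univ.filter (fun x : ZMod n → Bool => (U f x).card = k)).card =
      if k % 2 = (univ.filter (fun i : ZMod n => f i = fun b => !b)).card % 2
      then 2 * Nat.choose n k else 0 :=
  card_configurations_with_given_unstable_count_general n k f hf
end

section
/- If C and C' are two Boolean automata circuits of the same size n and the same sign (both positive or both negative), then there is a bijection sigma : {0,1}^n -> {0,1}^n such that for every configuration x and every subset P of nodes, sigma(F_C^P(x)) = G^P(sigma(x)), where F_C^P and G^P are the partial update functions of C and C' respectively. Consequently their general iteration graphs are isomorphic. -/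
/-!
In the Boolean ring `Bool` (where `+` is `xor`) every local function `id` or `not` is a translation
`b ↦ a + b`. Let `a i`, `b i` be the translations of the two circuits. Then `x ↦ x + c` conjugates
every partial update of the first circuit into the corresponding one of the second as soon as
`c i = c (i - 1) + a i + b i` for all `i`. Around the cycle such a `c` exists exactly when
`∑ i, (a i + b i) = 0`, i.e. when the two circuits have the same number of negations mod 2.
-/

open Finset

/-- Partial update of a Boolean automata circuit with respect to a subset `P`. -/
def FP {n : ℕ} (f : ZMod n → Bool → Bool) (P : Finset (ZMod n))
    (x : ZMod n → Bool) : ZMod n → Bool :=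
  fun i => if i ∈ P then f i (x (i - 1)) else x i

theorem Bool.natCast_eq_false_iff_even (k : ℕ) : (k : Bool) = false ↔ Even k := by
  induction k with
  | zero => rw [Nat.cast_zero]; exact iff_of_true rfl ⟨0, rfl⟩
  | succ k ih =>
    rw [Nat.cast_succ, Nat.even_add_one, ← ih]
    cases (k : Bool) <;> decide

theorem Bool.sum_eq_false_iff_even_card {ι : Type*} (s : Finset ι) (p : ι → Bool) :
    ∑ i ∈ s, p i = false ↔ Even #{i ∈ s | p i} := by
  rw [← Bool.natCast_eq_false_iff_even, ← sum_boole]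
  congr! 2 with i
  cases p i <;> rfl

theorem Bool.eq_add_of_eq_id_or_eq_not {φ : Bool → Bool} (hφ : φ = id ∨ φ = fun b => !b)
    (b : Bool) : φ b = φ false + b := by
  rcases hφ with rfl | rfl <;> cases b <;> rfl

theorem Bool.eq_not_iff_of_eq_id_or_eq_not {φ : Bool → Bool} (hφ : φ = id ∨ φ = fun b => !b) :
    (φ = fun b => !b) ↔ φ false = true := by
  rcases hφ with rfl | rfl <;> decide

theorem sum_apply_false_eq_of_even_iff_even {ι : Type*} [Fintype ι] {f g : ι → Bool → Bool}
    (hf : ∀ i, f i = id ∨ f i = fun b => !b)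
    (hg : ∀ i, g i = id ∨ g i = fun b => !b)
    (hsign : Even (univ.filter (fun i : ι => f i = fun b => !b)).card ↔
             Even (univ.filter (fun i : ι => g i = fun b => !b)).card) :
    ∑ i, f i false = ∑ i, g i false := by
  simp only [Bool.eq_not_iff_of_eq_id_or_eq_not (hf _), Bool.eq_not_iff_of_eq_id_or_eq_not (hg _),
    ← Bool.sum_eq_false_iff_even_card] at hsign
  revert hsign
  cases ∑ i, f i false <;> cases ∑ i, g i false <;> decide

theorem ZMod.exists_sub_one_add_eq_of_sum_eq_zero {M : Type*} [AddCommMonoid M] {n : ℕ}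
    [NeZero n] (ε : ZMod n → M) (hε : ∑ i, ε i = 0) :
    ∃ c : ZMod n → M, ∀ i, c (i - 1) + ε i = c i := by
  obtain ⟨m, rfl⟩ := Nat.exists_eq_succ_of_ne_zero (NeZero.ne n)
  refine ⟨fun i => ∑ k ∈ range (i.val + 1), ε k, fun i => ?_⟩
  have hval : (i - 1).val = if i = 0 then m else i.val - 1 := Fin.coe_sub_one i
  dsimp only
  obtain rfl | hi := eq_or_ne i 0
  · have hsum : ∑ k ∈ range (m + 1), ε k = 0 := by
      rw [sum_range, ← hε]
      exact Fintype.sum_congr _ _ fun i => congrArg ε (Fin.cast_val_eq_self i)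
    rw [hval, if_pos rfl, hsum, zero_add, ZMod.val_zero, sum_range_one, Nat.cast_zero]
  · rw [hval, if_neg hi, Nat.sub_add_cancel, sum_range_succ, ZMod.natCast_zmod_val]
    exact Nat.one_le_iff_ne_zero.2 ((ZMod.val_ne_zero i).2 hi)

theorem FP_add_of_sub_one_add_eq {n : ℕ} {f g : ZMod n → Bool → Bool} {c : ZMod n → Bool}
    (hf : ∀ i b, f i b = f i false + b) (hg : ∀ i b, g i b = g i false + b)
    (hc : ∀ i, c (i - 1) + (f i false + g i false) = c i) (x : ZMod n → Bool)
    (P : Finset (ZMod n)) : FP f P x + c = FP g P (x + c) := by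
  funext i
  simp only [FP, Pi.add_apply]
  split_ifs
  · rw [hf, hg, ← hc]
    cases x (i - 1) <;> cases c (i - 1) <;> cases f i false <;> cases g i false <;> rfl
  · rfl

/-- two circuits of the same size and sign have isomorphic general
iteration graphs, via a bijection commuting with every partial update. -/
theorem same_sign_circuits_isomorphic_iteration_graphs
    (n : ℕ) [NeZero n] (f g : ZMod n → Bool → Bool)
    (hf : ∀ i, f i = id ∨ f i = fun b => !b)
    (hg : ∀ i, g i = id ∨ g i = fun b => !b)
    (hsign : Even (univ.filter (fun i : ZMod n => f i = fun b => !b)).card ↔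
             Even (univ.filter (fun i : ZMod n => g i = fun b => !b)).card) :
    ∃ σ : (ZMod n → Bool) ≃ (ZMod n → Bool),
      ∀ (x : ZMod n → Bool) (P : Finset (ZMod n)),
        σ (FP f P x) = FP g P (σ x) := by
  have hε : ∑ i, (f i false + g i false) = 0 := by
    rw [sum_add_distrib, sum_apply_false_eq_of_even_iff_even hf hg hsign, BooleanRing.add_self]
  obtain ⟨c, hc⟩ := ZMod.exists_sub_one_add_eq_of_sum_eq_zero _ hε
  exact ⟨Equiv.addRight c, FP_add_of_sub_one_add_eq (fun i => Bool.eq_add_of_eq_id_or_eq_not (hf i))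
    (fun i => Bool.eq_add_of_eq_id_or_eq_not (hg i)) hc⟩
end

section
/- Let C be the canonical positive Boolean automata circuit of size n. Then u is non-increasing along arcs of the general iteration graph: for every configuration x and every subset P of nodes, u(F^P(x)) <= u(x). Hence, for configurations x, y with u(x) > u(y), x is not reachable from y in the general iteration graph. -/
open Finset

/-- Partial update of the canonical positive circuit. -/
def FPc {n : ℕ} (P : Finset (ZMod n)) (x : ZMod n → Bool) : ZMod n → Bool :=
  fun i => if i ∈ P then x (i - 1) else x i

/-- Number of unstable nodes in the canonical positive circuit. -/
def uc {n : ℕ} [NeZero n] (x : ZMod n → Bool) : ℕ :=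
  (univ.filter (fun i : ZMod n => x i ≠ x (i - 1))).card

/-- One step of the general iteration graph. -/
def step {n : ℕ} (x y : ZMod n → Bool) : Prop :=
  ∃ P : Finset (ZMod n), P.Nonempty ∧ y = FPc P x

/-- Key auxiliary fact: if `i ∈ P` and `FPc P x` is unstable at `i`, then
`i - 1 ∈ P` and `x` is unstable at `i - 1`. -/
lemma keyA {n : ℕ} (x : ZMod n → Bool) (P : Finset (ZMod n)) (i : ZMod n)
    (hiP : i ∈ P) (h : FPc P x i ≠ FPc P x (i - 1)) :
    i - 1 ∈ P ∧ x (i - 1) ≠ x (i - 1 - 1) := by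
  simp only [FPc, if_pos hiP] at h
  by_cases h1 : i - 1 ∈ P
  · simp only [if_pos h1] at h
    exact ⟨h1, h⟩
  · simp only [if_neg h1] at h
    exact absurd rfl h

lemma uc_FPc_le {n : ℕ} [NeZero n] (x : ZMod n → Bool) (P : Finset (ZMod n)) :
    uc (FPc P x) ≤ uc x := by
  classical
  unfold uc
  apply Finset.card_le_card_of_injOn
    (fun i => if i - 1 ∈ P ∧ x (i - 1) ≠ x (i - 1 - 1) then i - 1 else i)
  · intro i hi
    simp only [mem_coe, mem_filter, mem_univ, true_and] at hi ⊢
    by_cases hc : i - 1 ∈ P ∧ x (i - 1) ≠ x (i - 1 - 1)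
    · rw [if_pos hc]; exact hc.2
    · rw [if_neg hc]
      -- i ∉ P, otherwise keyA contradicts hc
      have hiP : i ∉ P := fun h => hc (keyA x P i h hi)
      simp only [FPc, if_neg hiP] at hi
      by_cases h1 : i - 1 ∈ P
      · simp only [if_pos h1] at hi
        have hx : x (i - 1) = x (i - 1 - 1) := by
          by_contra hx; exact hc ⟨h1, hx⟩
        rw [hx]; exact hi
      · simpa only [if_neg h1] using hi
  · intro i hi j hj hij
    simp only [mem_coe, mem_filter, mem_univ, true_and] at hi hj
    simp only at hij
    by_cases hci : i - 1 ∈ P ∧ x (i - 1) ≠ x (i - 1 - 1) <;>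
      by_cases hcj : j - 1 ∈ P ∧ x (j - 1) ≠ x (j - 1 - 1)
    · rw [if_pos hci, if_pos hcj] at hij; exact sub_left_injective hij
    · -- i ↦ i - 1, j ↦ j, with i - 1 = j
      rw [if_pos hci, if_neg hcj] at hij
      -- j = i - 1 ∈ P, j unstable in FPc P x ⇒ keyA contradicts hcj
      exact absurd (keyA x P j (hij ▸ hci.1) hj) hcj
    · rw [if_neg hci, if_pos hcj] at hij
      exact absurd (keyA x P i (hij ▸ hcj.1) hi) hci
    · rw [if_neg hci, if_neg hcj] at hij; exact hij

/-- `u` is non-increasing along arcs of the general iteration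
graph of the canonical positive circuit; hence if `u x > u y` then `x` is not
reachable from `y`. -/
theorem u_nonincreasing_along_arcs
    (n : ℕ) [NeZero n] :
    (∀ (x : ZMod n → Bool) (P : Finset (ZMod n)), uc (FPc P x) ≤ uc x) ∧
    (∀ x y : ZMod n → Bool, uc x > uc y → ¬ Relation.ReflTransGen step y x) := by
  refine ⟨fun x P => uc_FPc_le x P, fun x y hgt hreach => ?_⟩
  have : uc x ≤ uc y := by
    clear hgt
    induction hreach with
    | refl => exact le_refl _
    | tail _ hstep ih =>
      obtain ⟨P, _, rfl⟩ := hstep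
      exact le_trans (uc_FPc_le _ P) ih
  omega
end

section
/- Let C be the canonical positive Boolean automata circuit of size n. For any configurations x, y with u(x) > u(y), y is reachable from x in the general iteration graph: there is a finite sequence of subset updates transforming x into y. -/
/-!
Cut the cycle at a node `w` where `x` and `y` agree and such that on every arc `w + 1, …, w + j`
the configuration `x` has at least as many unstable nodes as `y`; such a node exists by a
cycle-lemma argument because `x` has more unstable nodes in total. The single-node update at `i`
copies `x (i - 1)` into `x i`, so unstable nodes move clockwise and annihilate in pairs. Repairing
the arc from its far end, a wrong value is copied from the last earlier node carrying the right
one; the arc-wise domination guarantees that this source exists and that the domination survives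
the copying.
-/

open Finset

open Relation Function

theorem Nat.exists_eq_of_le_succ {f : ℕ → ℕ} (hf : ∀ i, f (i + 1) ≤ f i + 1) {m : ℕ}
    (h0 : f 0 ≤ m) : ∀ {j}, m < f j → ∃ i < j, f i = m
  | 0, hm => absurd h0 (Nat.not_le.mpr hm)
  | j + 1, hm => by
    rcases Nat.lt_or_ge m (f j) with hlt | hge
    · obtain ⟨i, hi, rfl⟩ := Nat.exists_eq_of_le_succ hf h0 hlt
      exact ⟨i, by omega, rfl⟩
    · exact ⟨j, by omega, by have := hf j; omega⟩

theorem exists_forall_lt_of_add_period {f : ℕ → ℤ} {n : ℕ} {T : ℤ} (hT : 0 < T)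
    (hf : ∀ m, f (m + n) = f m + T) : ∃ u, ∀ m, u < m → f u < f m := by
  have hn : n ≠ 0 := by rintro rfl; have := hf 0; simp at this; omega
  obtain ⟨u₀, hu₀n, hu₀⟩ := (range n).exists_min_image f (nonempty_range_iff.mpr hn)
  have hshift : ∀ {m}, n ≤ m → f m = f (m - n) + T := fun hm => by
    rw [← hf, Nat.sub_add_cancel hm]
  have hmin : ∀ m, f u₀ ≤ f m := by
    intro m
    induction m using Nat.strong_induction_on with
    | _ m ih =>
      rcases Nat.lt_or_ge m n with hm | hm
      · exact hu₀ m (mem_range.mpr hm)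
      · linarith [hshift hm, ih (m - n) (by omega)]
  set u := Nat.findGreatest (fun m => f m = f u₀) n
  have hu : f u = f u₀ :=
    Nat.findGreatest_spec (P := fun m => f m = f u₀) (mem_range.mp hu₀n).le rfl
  refine ⟨u, fun m hm => ?_⟩
  rcases Nat.lt_or_ge n m with hnm | hmn
  · linarith [hshift hnm.le, hmin (m - n)]
  · exact hu ▸ lt_of_le_of_ne (hmin m) (Ne.symm (Nat.findGreatest_is_greatest hm hmn))

theorem Bool.eq_of_ne_of_ne {a b c : Bool} (ha : a ≠ c) (hb : b ≠ c) : a = b := by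
  cases a <;> cases b <;> cases c <;> simp_all

namespace CanonicalPositiveCircuit

variable {n : ℕ}

theorem add_natCast_eq_add_natCast_iff {w : ZMod n} {i j : ℕ} (hi : i < n) (hj : j < n) :
    w + (i : ZMod n) = w + j ↔ i = j := by
  rw [add_right_inj, ZMod.natCast_eq_natCast_iff', Nat.mod_eq_of_lt hi, Nat.mod_eq_of_lt hj]

theorem step_update (z : ZMod n → Bool) (p : ZMod n) : step z (update z p (z (p - 1))) := by
  refine ⟨{p}, singleton_nonempty p, funext fun i => ?_⟩
  by_cases h : i = p <;> simp [FPc, h]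

/-- Number of unstable nodes among `w + 1, …, w + j`. -/
def unstableCount (z : ZMod n → Bool) (w : ZMod n) (j : ℕ) : ℕ :=
  ∑ i ∈ range j, if z (w + (i + 1 : ℕ)) = z (w + i) then 0 else 1

section

variable (z : ZMod n → Bool) (w : ZMod n)

theorem unstableCount_succ (j : ℕ) : unstableCount z w (j + 1) =
    unstableCount z w j + if z (w + (j + 1 : ℕ)) = z (w + j) then 0 else 1 :=
  sum_range_succ _ _

theorem unstableCount_succ_le (j : ℕ) : unstableCount z w (j + 1) ≤ unstableCount z w j + 1 := by
  rw [unstableCount_succ]; split <;> omega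

theorem unstableCount_mono : Monotone (unstableCount z w) :=
  monotone_nat_of_le_succ fun j => by rw [unstableCount_succ]; omega

theorem unstableCount_add (a b : ℕ) :
    unstableCount z w (a + b) = unstableCount z w a + unstableCount z (w + a) b := by
  simp only [unstableCount, sum_range_add, Nat.cast_add, add_assoc]

theorem unstableCount_congr {z' : ZMod n → Bool} {j : ℕ}
    (h : ∀ i ≤ j, z (w + i) = z' (w + i)) : unstableCount z w j = unstableCount z' w j :=
  sum_congr rfl fun i hi => by
    rw [mem_range] at hi
    rw [h i hi.le, h (i + 1) hi]

theorem even_unstableCount_iff (j : ℕ) : Even (unstableCount z w j) ↔ z (w + j) = z w := by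
  induction j with
  | zero => simp [unstableCount]
  | succ j ih =>
    rw [unstableCount_succ]
    split_ifs with h
    · rw [add_zero, ih, h]
    · rw [Nat.even_add_one, ih]
      cases hj : z (w + j) <;> cases hw : z w <;> simp_all

theorem unstableCount_period [NeZero n] : unstableCount z w n = uc z := by
  rw [uc, card_filter, unstableCount]
  refine sum_nbij' (fun i => w + (i + 1 : ℕ)) (fun p => (p - w - 1).val) (by simp)
    (fun p _ => mem_range.mpr (ZMod.val_lt _)) (fun i hi => ?_) (fun p _ => ?_) (fun i _ => ?_)
  · rw [mem_range] at hi
    simp [ZMod.val_cast_of_lt hi]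
  · simp
  · simp [ite_not, ← add_assoc]

theorem exists_ne_of_unstableCount_pos {j : ℕ} (hpos : 0 < unstableCount z w j) :
    ∃ c < j, z (w + c) ≠ z (w + j) ∧ unstableCount z w c + 1 = unstableCount z w j := by
  obtain ⟨c, hc, hcount⟩ := Nat.exists_eq_of_le_succ (unstableCount_succ_le z w)
    (m := unstableCount z w j - 1) (Nat.zero_le _) (j := j) (by omega)
  refine ⟨c, hc, fun h => ?_, by omega⟩
  have hone : unstableCount z (w + c) (j - c) = 1 := by
    have := unstableCount_add z w c (j - c)
    rw [Nat.add_sub_cancel' hc.le] at this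
    omega
  have hflip := (even_unstableCount_iff z (w + c) (j - c)).not.mp (by simp [hone])
  rw [add_assoc, ← Nat.cast_add, Nat.add_sub_cancel' hc.le] at hflip
  exact hflip h.symm

theorem exists_reachable_fill {c e : ℕ} (hce : c ≤ e) (he : e < n) :
    ∃ z', ReflTransGen step z z' ∧ (∀ j, c ≤ j → j ≤ e → z' (w + j) = z (w + c)) ∧
      ∀ j < n, j ≤ c ∨ e < j → z' (w + j) = z (w + j) := by
  induction e, hce using Nat.le_induction with
  | base => exact ⟨z, .refl, fun j h₁ h₂ => by rw [le_antisymm h₂ h₁], fun _ _ _ => rfl⟩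
  | succ e hce ih =>
    obtain ⟨z', hz', hfill, hout⟩ := ih (by omega)
    have hne : ∀ {j}, j < n → j ≠ e + 1 → w + (j : ZMod n) ≠ w + (e + 1 : ℕ) :=
      fun hj hje => (add_natCast_eq_add_natCast_iff hj he).not.mpr hje
    refine ⟨update z' (w + (e + 1 : ℕ)) (z (w + c)), hz'.tail ?_, fun j h₁ h₂ => ?_,
      fun j hj hcj => ?_⟩
    · have hprev : w + ((e + 1 : ℕ) : ZMod n) - 1 = w + e := by push_cast; ring
      simpa only [hprev, hfill e hce le_rfl] using step_update z' (w + (e + 1 : ℕ))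
    · rcases h₂.eq_or_lt with rfl | hlt
      · exact update_self ..
      · rw [update_of_ne (hne (by omega) hlt.ne), hfill j h₁ (by omega)]
    · rw [update_of_ne (hne hj (by omega)), hout j hj (by omega)]

end

theorem unstableCount_lt_of_ne {y z : ZMod n → Bool} {w : ZMod n} {j : ℕ} (hw : z w = y w)
    (hne : z (w + j) ≠ y (w + j)) (hle : unstableCount y w j ≤ unstableCount z w j) :
    unstableCount y w j < unstableCount z w j := by
  refine hle.lt_of_ne fun heq => hne ?_
  have hpar := (even_unstableCount_iff z w j).symm.trans (heq ▸ even_unstableCount_iff y w j)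
  rw [hw] at hpar
  by_cases hy : y (w + j) = y w
  · rw [hy, hpar.mpr hy]
  · exact Bool.eq_of_ne_of_ne (hpar.not.mpr hy) hy

variable [NeZero n]

theorem reachable_of_agree_above {y : ZMod n → Bool} {w : ZMod n} {k : ℕ} (hk : k < n)
    {z : ZMod n → Bool} (hw : z w = y w) (hagree : ∀ j, k < j → j < n → z (w + j) = y (w + j))
    (hdom : ∀ j ≤ k, unstableCount y w j ≤ unstableCount z w j) : ReflTransGen step z y := by
  induction k generalizing z with
  | zero =>
    suffices z = y from this ▸ .refl
    funext p
    obtain ⟨j, hj, rfl⟩ : ∃ j < n, p = w + j := ⟨(p - w).val, ZMod.val_lt _, by simp⟩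
    rcases j.eq_zero_or_pos with rfl | hj₀
    · simpa using hw
    · exact hagree j hj₀ hj
  | succ k ih =>
    by_cases hk₁ : z (w + (k + 1 : ℕ)) = y (w + (k + 1 : ℕ))
    · refine ih (by omega) hw (fun j hj hjn => ?_) (fun j hj => hdom j (by omega))
      rcases (Nat.succ_le_of_lt hj).eq_or_lt with rfl | h
      exacts [hk₁, hagree j h hjn]
    have hlt := unstableCount_lt_of_ne hw hk₁ (hdom _ le_rfl)
    obtain ⟨c, hc, hsource, hcount⟩ :=
      exists_ne_of_unstableCount_pos z w (hlt.trans_le' (Nat.zero_le _))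
    obtain ⟨z', hz', hfill, hout⟩ := exists_reachable_fill z w hc.le hk
    have hprefix : ∀ j ≤ c, unstableCount z' w j = unstableCount z w j := fun j hj =>
      unstableCount_congr z' w fun i hi => hout i (by omega) (.inl (by omega))
    refine hz'.trans (ih (by omega) ?_ (fun j hj hjn => ?_) (fun j hj => ?_))
    · simpa [hw] using hout 0 (by omega) (.inl (Nat.zero_le _))
    · rcases (Nat.succ_le_of_lt hj).eq_or_lt with rfl | h
      · rw [hfill _ hc.le le_rfl]
        exact Bool.eq_of_ne_of_ne hsource (Ne.symm hk₁)
      · rw [hout j hjn (.inr h)]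
        exact hagree j h hjn
    · rcases le_or_gt j c with hjc | hcj
      · rw [hprefix j hjc]
        exact hdom j (by omega)
      · calc unstableCount y w j ≤ unstableCount y w (k + 1) := unstableCount_mono y w (by omega)
          _ ≤ unstableCount z w c := by omega
          _ = unstableCount z' w c := (hprefix c le_rfl).symm
          _ ≤ unstableCount z' w j := unstableCount_mono z' w hcj.le

theorem exists_anchor {x y : ZMod n → Bool} (h : uc y < uc x) :
    ∃ w, x w = y w ∧ ∀ j, unstableCount y w j ≤ unstableCount x w j := by
  -- `D` gains `uc x - uc y > 0` per turn of the cycle, so it has a last strict minimum `u`;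
  -- `u` is an anchor, unless `x u ≠ y u`, in which case `D` rises at `u + 1` and `u + 1` is one.
  set D : ℕ → ℤ := fun m => unstableCount x 0 m - unstableCount y 0 m
  have hD : ∀ m j : ℕ, unstableCount y m j ≤ unstableCount x m j ↔ D m ≤ D (m + j) := by
    intro m j
    simp only [D, unstableCount_add _ 0 m j, zero_add]
    omega
  have hperiod : ∀ m, D (m + n) = D m + (uc x - uc y) := fun m => by
    simp only [D, unstableCount_add _ 0 m n, unstableCount_period]
    push_cast
    ring
  obtain ⟨u, hu⟩ := exists_forall_lt_of_add_period (by omega) hperiod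
  by_cases hxy : x u = y u
  · refine ⟨u, hxy, fun j => (hD u j).2 ?_⟩
    rcases j with _ | j
    exacts [le_rfl, (hu (u + (j + 1)) (by omega)).le]
  have hstep : D (u + 1) = D u + 1 ∧ x (u + 1 : ℕ) ≠ x u ∧ y (u + 1 : ℕ) = y u := by
    have hx := unstableCount_succ x 0 u
    have hy := unstableCount_succ y 0 u
    have hlt := hu (u + 1) (Nat.lt_succ_self u)
    simp only [D, zero_add] at hx hy hlt ⊢
    split_ifs at hx hy with h₁ h₂ h₂ <;> first | omega | exact ⟨by omega, h₁, h₂⟩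
  refine ⟨(u + 1 : ℕ), ?_, fun j => (hD (u + 1) j).2 ?_⟩
  · rw [hstep.2.2]
    exact Bool.eq_of_ne_of_ne hstep.2.1 (Ne.symm hxy)
  · rcases j with _ | j
    · exact le_rfl
    · linarith [hstep.1, hu (u + 1 + (j + 1)) (by omega)]

end CanonicalPositiveCircuit

/-- in the canonical positive circuit, if `u x > u y` then `y` is
reachable from `x` in the general iteration graph. -/
theorem greater_u_implies_reachable
    (n : ℕ) [NeZero n] (x y : ZMod n → Bool) (h : uc x > uc y) :
    Relation.ReflTransGen step x y := by
  obtain ⟨w, hw, hdom⟩ := CanonicalPositiveCircuit.exists_anchor h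
  exact CanonicalPositiveCircuit.reachable_of_agree_above (Nat.sub_one_lt (NeZero.ne n)) hw
    (fun j hj hjn => by omega) fun j _ => hdom j
end

section
/- For a positive Boolean automata circuit of size n, the maximum value of u over all configurations is n if n is even and n-1 if n is odd; for a negative circuit of size n, the maximum is n if n is odd and n-1 if n is even. -/
open Finset

lemma card_filter_ne_apply_modEq_two {ι : Type*} [Fintype ι] (σ : Equiv.Perm ι)
    (f : ι → Bool → Bool) (hf : ∀ i, f i = id ∨ f i = fun b => !b) (x : ι → Bool) :
    #{i | x i ≠ f i (x (σ i))} ≡ #{i | f i = fun b => !b} [MOD 2] := by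
  let ind : Bool → ZMod 2 := fun b => if b then 1 else 0
  have arc : ∀ i, (if x i ≠ f i (x (σ i)) then 1 else 0 : ZMod 2) =
      ind (x i) + ind (x (σ i)) + if f i = (fun b => !b) then 1 else 0 := by
    intro i
    have hid : (id : Bool → Bool) ≠ fun b => !b := fun h => by simpa using congrFun h true
    rcases hf i with h | h <;> rw [h] <;> cases x i <;> cases x (σ i) <;> simp [ind, hid] <;> rfl
  rw [← ZMod.natCast_eq_natCast_iff, card_filter, card_filter]
  push_cast
  calc ∑ i, (if x i ≠ f i (x (σ i)) then 1 else 0 : ZMod 2)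
      = ∑ i, ind (x i) + ∑ i, ind (x (σ i)) + ∑ i, if f i = (fun b => !b) then 1 else 0 := by
        simp only [arc, sum_add_distrib]
    _ = ∑ i, if f i = (fun b => !b) then 1 else 0 := by
        rw [Equiv.sum_comp σ (fun i => ind (x i)), CharTwo.add_self_eq_zero, zero_add]

section Greedy

variable {n : ℕ} (f : ZMod n → Bool → Bool)

def greedySeq : ℕ → Bool
  | 0 => false
  | k + 1 => !f ((k + 1 : ℕ) : ZMod n) (greedySeq k)

def greedyConfig (i : ZMod n) : Bool := greedySeq f i.val

lemma greedyConfig_natCast {k : ℕ} (hk : k < n) : greedyConfig f k = greedySeq f k := by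
  rw [greedyConfig, ZMod.val_cast_of_lt hk]

variable [NeZero n]

lemma greedyConfig_ne {i : ZMod n} (hi : i ≠ 0) :
    greedyConfig f i ≠ f i (greedyConfig f (i - 1)) := by
  obtain ⟨k, hk⟩ : ∃ k, i.val = k + 1 :=
    Nat.exists_eq_succ_of_ne_zero ((ZMod.val_ne_zero i).mpr hi)
  have hkn : k + 1 < n := hk ▸ ZMod.val_lt i
  obtain rfl : i = ((k + 1 : ℕ) : ZMod n) := by rw [← hk, ZMod.natCast_zmod_val]
  have hpred : ((k + 1 : ℕ) : ZMod n) - 1 = k := by push_cast; ring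
  rw [hpred, greedyConfig_natCast f hkn, greedyConfig_natCast f (by omega), greedySeq]
  exact Bool.not_ne_self _

lemma erase_zero_subset_U_greedyConfig : univ.erase 0 ⊆ U f (greedyConfig f) := fun i hi =>
  mem_filter.mpr ⟨mem_univ i, greedyConfig_ne f (ne_of_mem_erase hi)⟩

end Greedy

lemma isGreatest_range_of_le_of_modEq {α : Type*} (g : α → ℕ) (n p : ℕ) (hle : ∀ a, g a ≤ n)
    (hpar : ∀ a, g a ≡ p [MOD 2]) (a₀ : α) (h₀ : n - 1 ≤ g a₀) :
    IsGreatest (Set.range g) (if n % 2 = p % 2 then n else n - 1) := by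
  have h₀' := hpar a₀
  unfold Nat.ModEq at h₀'
  refine ⟨⟨a₀, ?_⟩, ?_⟩
  · have := hle a₀
    split_ifs <;> omega
  · rintro _ ⟨a, rfl⟩
    have := hle a
    have := hpar a
    unfold Nat.ModEq at this
    split_ifs <;> omega

/-- the maximum of `u` over all configurations is `n` when `n`
has the parity of the number of negative arcs, and `n - 1` otherwise (covering
both the positive and the negative case). -/
theorem max_unstable_count
    (n : ℕ) [NeZero n] (f : ZMod n → Bool → Bool)
    (hf : ∀ i, f i = id ∨ f i = fun b => !b) :
    IsGreatest (Set.range (fun x : ZMod n → Bool => (U f x).card))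
      (if n % 2 = (univ.filter (fun i : ZMod n => f i = fun b => !b)).card % 2
       then n else n - 1) := by
  refine isGreatest_range_of_le_of_modEq _ n _ (fun x => ?_)
    (card_filter_ne_apply_modEq_two (Equiv.subRight 1) f hf) (greedyConfig f) ?_
  · exact (card_le_univ _).trans_eq (ZMod.card n)
  · simpa [card_erase_of_mem] using card_le_card (erase_zero_subset_U_greedyConfig f)
end

section
/- For a Boolean automata circuit of size n, any configuration x with u(x) = k != 0 is uniquely determined by the pair (U(x), x_{i_1}) where U(x) = {i_1 < ... < i_k} is its set of unstable nodes and x_{i_1} is the state of its smallest unstable node: the map x -> (U(x), x_{i_1}) is injective on {x : u(x) = k}. -/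
open Finset

/-! Since `x i = f i (x (i - 1))` exactly when `i ∉ U f x`, the state at `i` is a function of the
state at `i - 1` and of the unstable set; walking once around the circuit from one node, the
unstable set and the state at that node therefore determine the whole configuration. -/

theorem apply_eq_of_U_eq_of_apply_sub_one_eq {n : ℕ} [NeZero n] {f : ZMod n → Bool → Bool}
    {x y : ZMod n → Bool} (hU : U f x = U f y) {i : ZMod n} (h : x (i - 1) = y (i - 1)) :
    x i = y i := by
  have hmem : x i ≠ f i (y (i - 1)) ↔ y i ≠ f i (y (i - 1)) := by
    simpa [U, h] using congrArg (i ∈ ·) hU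
  revert hmem
  cases x i <;> cases y i <;> cases f i (y (i - 1)) <;> simp

theorem apply_add_natCast_eq_of_U_eq {n : ℕ} [NeZero n] {f : ZMod n → Bool → Bool}
    {x y : ZMod n → Bool} (hU : U f x = U f y) {i : ZMod n} (h : x i = y i) (t : ℕ) :
    x (i + t) = y (i + t) := by
  induction t with
  | zero => simpa using h
  | succ t ih =>
    apply apply_eq_of_U_eq_of_apply_sub_one_eq hU
    rwa [Nat.cast_succ, ← add_assoc, add_sub_cancel_right]

theorem configuration_determined_by_unstable_set_general
    (n : ℕ) [NeZero n] (f : ZMod n → Bool → Bool)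
    (x y : ZMod n → Bool)
    (hUxy : U f x = U f y)
    (i₁ : ZMod n)
    (hstate : x i₁ = y i₁) :
    x = y := by
  funext i
  have hi : i = i₁ + ((i - i₁).val : ZMod n) := by
    rw [ZMod.natCast_val, ZMod.cast_id]; ring
  rw [hi, apply_add_natCast_eq_of_U_eq hUxy hstate]

/-- a configuration with `u x = k ≠ 0` is determined by its
unstable set together with its state at the smallest unstable node: if two such
configurations have the same unstable set and agree at the node of smallest
value in it, they are equal. -/
theorem configuration_determined_by_unstable_set
    (n k : ℕ) [NeZero n] (f : ZMod n → Bool → Bool)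
    (hf : ∀ i, f i = id ∨ f i = fun b => !b) (hk : k ≠ 0)
    (x y : ZMod n → Bool)
    (hx : (U f x).card = k) (hy : (U f y).card = k)
    (hUxy : U f x = U f y)
    (i₁ : ZMod n) (hi₁ : i₁ ∈ U f x)
    (hmin : ∀ j ∈ U f x, i₁.val ≤ j.val)
    (hstate : x i₁ = y i₁) :
    x = y :=
  configuration_determined_by_unstable_set_general n f x y hUxy i₁ hstate
end

section
/- For a negative Boolean automata circuit of size n, the set of configurations of minimal u-value (u(x) = 1) has exactly 2n elements, and u(x) >= 1 for all configurations x (so a negative circuit has no fixed point under any update). -/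
open Finset

/-!
Read node states in `ZMod 2` and let `s i = 1` exactly when `f i` is the negation. Node `i` is
unstable iff `x i - x (i - 1) + s i = 1`. Around the cycle the differences `x i - x (i - 1)` sum
to `0`, so `u x ≡ ∑ s i ≡ 1 (mod 2)`; in particular `u x ≥ 1`. Conversely a vector on the cycle is
the difference vector of some configuration iff its entries sum to `0`, and that configuration is
determined by its value at `0`. Hence `x ↦ (x 0, U f x)` is a bijection onto
`Bool × {S | #S odd}`, and for odd `k` there are `2 * n.choose k` configurations with `u x = k`.
-/

namespace ZMod

variable {n : ℕ} [NeZero n]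

theorem sum_range_natCast {M : Type*} [AddCommMonoid M] (g : ZMod n → M) :
    ∑ j ∈ range n, g j = ∑ i, g i :=
  sum_nbij' Nat.cast val (fun _ _ => mem_univ _) (fun i _ => mem_range.2 (val_lt i))
    (fun _ hj => val_cast_of_lt (mem_range.1 hj)) (fun i _ => natCast_zmod_val i) (fun _ _ => rfl)

theorem natCast_card_filter_eq_one {ι : Type*} [Fintype ι] (v : ι → ZMod 2) :
    (#{i | v i = 1} : ZMod 2) = ∑ i, v i := by
  have hv : ∀ a : ZMod 2, a = if a = 1 then 1 else 0 := by decide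
  rw [← sum_boole]
  exact sum_congr rfl fun i _ => (hv (v i)).symm

end ZMod

section CyclicDifference

variable {n : ℕ} [NeZero n] {G : Type*} [AddCommGroup G]

theorem sum_sub_pred_eq_zero (x : ZMod n → G) : ∑ i, (x i - x (i - 1)) = 0 := by
  rw [sum_sub_distrib, sub_eq_zero]
  exact ((Equiv.subRight 1).sum_comp x).symm

theorem eq_of_sub_pred_eq {x y : ZMod n → G} (h0 : x 0 = y 0)
    (h : ∀ i, x i - x (i - 1) = y i - y (i - 1)) : x = y := by
  have hnat : ∀ k : ℕ, x k = y k := by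
    intro k
    induction k with
    | zero => simpa using h0
    | succ k ih =>
      have hk := h (k + 1)
      rw [add_sub_cancel_right, ih, sub_left_inj] at hk
      simpa using hk
  funext i
  simpa using hnat i.val

theorem exists_sub_pred_eq {w : ZMod n → G} (hw : ∑ i, w i = 0) (c : G) :
    ∃ x : ZMod n → G, x 0 = c ∧ ∀ i, x i - x (i - 1) = w i := by
  set X : ℕ → G := fun k => c + ∑ j ∈ range k, w (j + 1) with hX
  have hfull : ∑ j ∈ range n, w (j + 1) = 0 := by
    rw [ZMod.sum_range_natCast (fun i => w (i + 1)), ← hw]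
    exact Equiv.sum_comp (Equiv.addRight 1) w
  have hXval : ∀ k ≤ n, X (k : ZMod n).val = X k := by
    intro k hk
    rcases hk.lt_or_eq with hk | rfl
    · rw [ZMod.val_cast_of_lt hk]
    · simp [hX, hfull]
  refine ⟨fun i => X i.val, by simp [hX], fun i => ?_⟩
  obtain ⟨m, hm, rfl⟩ : ∃ m < n, i = ((m + 1 : ℕ) : ZMod n) :=
    ⟨(i - 1).val, ZMod.val_lt _, by simp⟩
  dsimp only
  rw [hXval _ hm, Nat.cast_succ, add_sub_cancel_right, hXval m hm.le, hX]
  simp [sum_range_succ]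

end CyclicDifference

def Bool.toZModTwo (b : Bool) : ZMod 2 := if b then 1 else 0

theorem Bool.toZModTwo_injective : Function.Injective Bool.toZModTwo := by decide

theorem Bool.toZModTwo_decide_eq_one (z : ZMod 2) : (decide (z = 1)).toZModTwo = z := by
  revert z; decide

section Circuit

variable {n : ℕ} [NeZero n] (f : ZMod n → Bool → Bool)

def arcSign (i : ZMod n) : ZMod 2 := if f i = (fun b => !b) then 1 else 0

theorem sum_arcSign :
    ∑ i, arcSign f i = (#{i | f i = fun b => !b} : ZMod 2) :=
  sum_boole _ _

variable {f} (hf : ∀ i, f i = id ∨ f i = fun b => !b)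
include hf

theorem mem_U_iff (x : ZMod n → Bool) (i : ZMod n) :
    i ∈ U f x ↔ (x i).toZModTwo - (x (i - 1)).toZModTwo + arcSign f i = 1 := by
  have hid : (id : Bool → Bool) ≠ fun b => !b := fun h => by simpa using congrFun h true
  rcases hf i with h | h <;>
    simp only [U, mem_filter, mem_univ, true_and, arcSign, h, hid, if_true, if_false] <;>
    cases x i <;> cases x (i - 1) <;> decide

theorem U_eq_filter (x : ZMod n → Bool) :
    U f x = ({i | (x i).toZModTwo - (x (i - 1)).toZModTwo + arcSign f i = 1} : Finset _) := by
  ext i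
  rw [mem_U_iff hf, mem_filter, and_iff_right (mem_univ i)]

theorem odd_card_U (hneg : Odd #{i | f i = fun b => !b}) (x : ZMod n → Bool) :
    Odd #(U f x) := by
  rw [← ZMod.natCast_eq_one_iff_odd, U_eq_filter hf, ZMod.natCast_card_filter_eq_one,
    sum_add_distrib, sum_sub_pred_eq_zero (fun i => (x i).toZModTwo), zero_add, sum_arcSign,
    ZMod.natCast_eq_one_iff_odd]
  exact hneg

theorem eq_of_U_eq {x y : ZMod n → Bool} (h0 : x 0 = y 0) (hU : U f x = U f y) : x = y := by
  have heq : ∀ a b : ZMod 2, (a = 1 ↔ b = 1) → a = b := by decide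
  have hdiff : (fun i => (x i).toZModTwo) = fun i => (y i).toZModTwo := by
    refine eq_of_sub_pred_eq (by rw [h0]) fun i => add_right_cancel (b := arcSign f i) (heq _ _ ?_)
    rw [← mem_U_iff hf, ← mem_U_iff hf, hU]
  funext i
  exact Bool.toZModTwo_injective (congrFun hdiff i)

theorem exists_U_eq (hneg : Odd #{i | f i = fun b => !b}) {S : Finset (ZMod n)}
    (hS : Odd #S) (b : Bool) : ∃ x : ZMod n → Bool, x 0 = b ∧ U f x = S := by
  have hsum : ∑ i, ((if i ∈ S then 1 else 0) - arcSign f i) = 0 := by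
    rw [sum_sub_distrib, sum_boole, sum_arcSign, hneg.natCast_zmod_two, filter_mem_eq_inter,
      univ_inter, hS.natCast_zmod_two, sub_self]
  obtain ⟨z, hz0, hz⟩ := exists_sub_pred_eq hsum b.toZModTwo
  refine ⟨fun i => decide (z i = 1), ?_, ?_⟩
  · apply Bool.toZModTwo_injective
    rw [Bool.toZModTwo_decide_eq_one, hz0]
  · ext i
    rw [mem_U_iff hf, Bool.toZModTwo_decide_eq_one, Bool.toZModTwo_decide_eq_one, hz,
      sub_add_cancel]
    split_ifs with hi <;> simp [hi]

theorem card_filter_card_U_eq (hneg : Odd #{i | f i = fun b => !b}) {k : ℕ} (hk : Odd k) :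
    #{x : ZMod n → Bool | #(U f x) = k} = 2 * n.choose k := by
  calc #{x : ZMod n → Bool | #(U f x) = k}
      = #((univ : Finset Bool) ×ˢ powersetCard k (univ : Finset (ZMod n))) := by
        refine card_bij (fun x _ => (x 0, U f x)) (fun x hx => by simpa using hx)
          (fun x _ y _ hxy => eq_of_U_eq hf (Prod.ext_iff.1 hxy).1 (Prod.ext_iff.1 hxy).2) ?_
        rintro ⟨b, S⟩ hbS
        have hS : #S = k := by simpa using hbS
        obtain ⟨x, hx0, hxS⟩ := exists_U_eq hf hneg (hS ▸ hk) b
        exact ⟨x, by simpa [hxS] using hS, by rw [hx0, hxS]⟩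
    _ = 2 * n.choose k := by simp

end Circuit

/-- in a negative circuit of size `n`, there are exactly `2n`
configurations of minimal `u`-value `1`, and every configuration satisfies
`u x ≥ 1` (so there is no fixed point). -/
theorem negative_circuit_minimal_configurations
    (n : ℕ) [NeZero n] (f : ZMod n → Bool → Bool)
    (hf : ∀ i, f i = id ∨ f i = fun b => !b)
    (hneg : Odd (univ.filter (fun i : ZMod n => f i = fun b => !b)).card) :
    (univ.filter (fun x : ZMod n → Bool => (U f x).card = 1)).card = 2 * n ∧
    ∀ x : ZMod n → Bool, 1 ≤ (U f x).card :=
  ⟨by simpa using card_filter_card_U_eq hf hneg odd_one, fun x => (odd_card_U hf hneg x).pos⟩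
end
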